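/- For all integers k ≥ 4 and n ≥ 4 with n ≥ k, both the formula RPHP and the 3-CNF formula ERPHP have Lasserre refutations of rank 9. -/

import Mathlib

namespace NarrowProofs

open MvPolynomial

/-- A clause is a finite set of literals; a literal is a variable together with a
sign (`true` = positive literal, `false` = negative literal). -/
abbrev Clause (V : Type) := Finset (V × Bool)

/-- Twin-variable alphabet: `(v, false)` is the variable `v` itself and
`(v, true)` is its twin `v̄` (intended value `1 − v`). -/
abbrev PV (V : Type) := V × Bool

/-- The expansion of one term of a Sherali-Adams style derivation:
`∏_{i∈I} x_i · ∏_{j∈J} (1−x_j) · p`. -/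
noncomputable def expandTerm {σ : Type} (I J : Finset σ) (p : MvPolynomial σ ℝ) :
    MvPolynomial σ ℝ :=
  (∏ i ∈ I, X i) * (∏ j ∈ J, (1 - X j)) * p

/-- A Sherali-Adams style derivation of the inequality `r ≥ 0`, where each
`p_t` must come from the allowed set `Ax`: a formula
`∑_t α_t · ∏_{i∈I_t} x_i · ∏_{j∈J_t} (1−x_j) · p_t` with `α_t ≥ 0` that
expands to the polynomial `r`. -/
structure SAStyleDeriv (σ : Type) (Ax : Set (MvPolynomial σ ℝ))
    (r : MvPolynomial σ ℝ) where
  len : ℕ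
  α : Fin len → ℝ
  I : Fin len → Finset σ
  J : Fin len → Finset σ
  p : Fin len → MvPolynomial σ ℝ
  alpha_nonneg : ∀ t, 0 ≤ α t
  p_mem : ∀ t, p t ∈ Ax
  sums : ∑ t, α t • expandTerm (I t) (J t) (p t) = r

/-- The rank of the derivation is at most `d`: every expanded term has total
degree at most `d`. -/
def SAStyleDeriv.rankLE {σ : Type} {Ax : Set (MvPolynomial σ ℝ)}
    {r : MvPolynomial σ ℝ} (der : SAStyleDeriv σ Ax r) (d : ℕ) : Prop :=
  ∀ t, (expandTerm (der.I t) (der.J t) (der.p t)).totalDegree ≤ d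

/-- The size of the derivation: the total number of terms of the expanded
polynomials. -/
noncomputable def SAStyleDeriv.size {σ : Type} {Ax : Set (MvPolynomial σ ℝ)}
    {r : MvPolynomial σ ℝ} (der : SAStyleDeriv σ Ax r) : ℕ :=
  ∑ t, (expandTerm (der.I t) (der.J t) (der.p t)).support.card

/-- Boolean axioms `x²−x` and `x−x²`. -/
def boolAxioms (σ : Type) : Set (MvPolynomial σ ℝ) :=
  {p | ∃ x : σ, p = X x ^ 2 - X x ∨ p = X x - X x ^ 2}

/-- The polynomials allowed in a Sherali-Adams derivation from hypotheses `Q`: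
a hypothesis, a Boolean axiom, or the constant 1. -/
def SAAxioms (σ : Type) (Q : Set (MvPolynomial σ ℝ)) : Set (MvPolynomial σ ℝ) :=
  Q ∪ boolAxioms σ ∪ {1}

/-- The polynomials allowed in a Lasserre derivation from hypotheses `Q`:
a hypothesis, a Boolean axiom, the constant 1, or the square of an arbitrary
polynomial. -/
def LasAxioms (σ : Type) (Q : Set (MvPolynomial σ ℝ)) : Set (MvPolynomial σ ℝ) :=
  SAAxioms σ Q ∪ {p | ∃ q : MvPolynomial σ ℝ, p = q ^ 2}

/-- The SA encoding (truth = 1) of a clause: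
`∑_{i∈I} x_i + ∑_{j∈J} (1−x_j) − 1`. -/
noncomputable def encodeIneqSA {V : Type} [DecidableEq V] (C : Clause V) :
    MvPolynomial V ℝ :=
  (∑ l ∈ C, if l.2 then X l.1 else (1 - X l.1)) - 1

/-- The variables of the 3-CNF relativized pigeonhole principle `ERPHP`. -/
inductive ERVar where
  | p (u v : ℕ)
  | q (v w : ℕ)
  | r (v : ℕ)
  | rr (v v' : ℕ)
  | y (u v : ℕ)
  | z (v w : ℕ)
deriving DecidableEq

/-- The 3-CNF relativized pigeonhole principle formula with `k` pigeons chosen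
among `n` and `k-1` holes (all indices are 1-based). -/
def ERPHP (n k : ℕ) : Set (Clause ERVar) :=
  { C |
    (∃ u, 1 ≤ u ∧ u ≤ k ∧
      C = {(ERVar.p u 1, true), (ERVar.p u 2, true), (ERVar.y u 2, true)}) ∨
    (∃ u v, 1 ≤ u ∧ u ≤ k ∧ 2 ≤ v ∧ v ≤ n - 3 ∧
      C = {(ERVar.y u v, false), (ERVar.p u (v+1), true), (ERVar.y u (v+1), true)}) ∨
    (∃ u, 1 ≤ u ∧ u ≤ k ∧
      C = {(ERVar.y u (n-2), false), (ERVar.p u (n-1), true), (ERVar.p u n, true)}) ∨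
    (∃ v, 1 ≤ v ∧ v ≤ n ∧
      C = {(ERVar.r v, false), (ERVar.q v 1, true), (ERVar.z v 1, true)}) ∨
    (∃ v w, 1 ≤ v ∧ v ≤ n ∧ 1 ≤ w ∧ w ≤ k - 4 ∧
      C = {(ERVar.z v w, false), (ERVar.q v (w+1), true), (ERVar.z v (w+1), true)}) ∨
    (∃ v, 1 ≤ v ∧ v ≤ n ∧
      C = {(ERVar.z v (k-3), false), (ERVar.q v (k-2), true), (ERVar.q v (k-1), true)}) ∨
    (∃ u u' v, 1 ≤ u ∧ u ≤ k ∧ 1 ≤ u' ∧ u' ≤ k ∧ u ≠ u' ∧ 1 ≤ v ∧ v ≤ n ∧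
      C = {(ERVar.p u v, false), (ERVar.p u' v, false)}) ∨
    (∃ u v, 1 ≤ u ∧ u ≤ k ∧ 1 ≤ v ∧ v ≤ n ∧
      C = {(ERVar.p u v, false), (ERVar.r v, true)}) ∨
    (∃ v v', 1 ≤ v ∧ v ≤ n ∧ 1 ≤ v' ∧ v' ≤ n ∧ v ≠ v' ∧
      C = {(ERVar.r v, false), (ERVar.r v', false), (ERVar.rr v v', true)}) ∨
    (∃ v v' w, 1 ≤ v ∧ v ≤ n ∧ 1 ≤ v' ∧ v' ≤ n ∧ v ≠ v' ∧ 1 ≤ w ∧ w ≤ k - 1 ∧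
      C = {(ERVar.rr v v', false), (ERVar.q v w, false), (ERVar.q v' w, false)}) }

/-- The (wide-clause) relativized pigeonhole principle formula `RPHP` with `k`
pigeons chosen among `n` and `k−1` holes (1-based indices). -/
def RPHP (n k : ℕ) : Set (Clause ERVar) :=
  { C |
    (∃ u, 1 ≤ u ∧ u ≤ k ∧
      C = (Finset.Icc 1 n).image (fun v => (ERVar.p u v, true))) ∨
    (∃ u u' v, 1 ≤ u ∧ u ≤ k ∧ 1 ≤ u' ∧ u' ≤ k ∧ u ≠ u' ∧ 1 ≤ v ∧ v ≤ n ∧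
      C = {(ERVar.p u v, false), (ERVar.p u' v, false)}) ∨
    (∃ u v, 1 ≤ u ∧ u ≤ k ∧ 1 ≤ v ∧ v ≤ n ∧
      C = {(ERVar.p u v, false), (ERVar.r v, true)}) ∨
    (∃ v, 1 ≤ v ∧ v ≤ n ∧
      C = insert (ERVar.r v, false)
        ((Finset.Icc 1 (k - 1)).image (fun w => (ERVar.q v w, true)))) ∨
    (∃ v v' w, 1 ≤ v ∧ v ≤ n ∧ 1 ≤ v' ∧ v' ≤ n ∧ v ≠ v' ∧ 1 ≤ w ∧ w ≤ k - 1 ∧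
      C = {(ERVar.r v, false), (ERVar.r v', false),
           (ERVar.q v w, false), (ERVar.q v' w, false)}) }

/-!
Both refutations are one sum-of-squares argument. Boolean reasoning yields, in degree at most 5,
* `r_v ≥ ∑_u p_{u,v}`: the square `r_v (1 - ∑_u p_{u,v})²` together with `¬p_{u,v} ∨ ¬p_{u',v}`
  gives `r_v ≥ r_v ∑_u p_{u,v}`, and `¬p_{u,v} ∨ r_v` gives `r_v p_{u,v} ≥ p_{u,v}`;
* `∑_v p_{u,v} ≥ 1`, the pigeon clauses;
* `1 ≥ ∑_v r_v q_{v,w}`: the square `(1 - ∑_v r_v q_{v,w})²` with the collision clauses;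
* `∑_w r_v q_{v,w} ≥ r_v`: `r_v` times the hole clause of `v`.
Summed over all indices they give `(k - 1) - k ≥ 0`. The argument only uses the clauses of
`RPHP` multiplied by monomials, and these are derived from `ERPHP` by summing the clauses of the
extension chains of `y` and `z`, and by resolving on `r_{v,v'}`, which for the encoding of
clauses is plain addition.
-/

open Finset

section Derivations

variable {σ : Type} {Ax : Set (MvPolynomial σ ℝ)} {d : ℕ}

def Derivable (Ax : Set (MvPolynomial σ ℝ)) (d : ℕ) (r : MvPolynomial σ ℝ) : Prop :=
  ∃ der : SAStyleDeriv σ Ax r, der.rankLE d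

theorem totalDegree_expandTerm_le (I J : Finset σ) (p : MvPolynomial σ ℝ) :
    (expandTerm I J p).totalDegree ≤ #I + #J + p.totalDegree := by
  have hI : (∏ i ∈ I, X i : MvPolynomial σ ℝ).totalDegree ≤ #I :=
    (totalDegree_finsetProd _ _).trans (by simp [totalDegree_X])
  have hJ : (∏ j ∈ J, (1 - X j) : MvPolynomial σ ℝ).totalDegree ≤ #J := by
    refine (totalDegree_finsetProd _ _).trans
      ((sum_le_card_nsmul _ _ 1 fun j _ => ?_).trans ?_)
    · exact (totalDegree_sub _ _).trans (by simp [totalDegree_X])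
    · simp
  have := totalDegree_mul (∏ i ∈ I, X i : MvPolynomial σ ℝ) (∏ j ∈ J, (1 - X j))
  have := totalDegree_mul ((∏ i ∈ I, X i : MvPolynomial σ ℝ) * ∏ j ∈ J, (1 - X j)) p
  unfold expandTerm
  omega

@[simp]
theorem expandTerm_empty (I : Finset σ) (p : MvPolynomial σ ℝ) :
    expandTerm I ∅ p = (∏ i ∈ I, X i) * p := by
  simp [expandTerm]

namespace Derivable

theorem zero : Derivable Ax d 0 :=
  ⟨⟨0, Fin.elim0, Fin.elim0, Fin.elim0, Fin.elim0, (·.elim0), (·.elim0), by simp⟩, (·.elim0)⟩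

theorem of_eq {r r' : MvPolynomial σ ℝ} (h : Derivable Ax d r) (e : r = r') :
    Derivable Ax d r' :=
  e ▸ h

theorem add {r₁ r₂ : MvPolynomial σ ℝ} (h₁ : Derivable Ax d r₁) (h₂ : Derivable Ax d r₂) :
    Derivable Ax d (r₁ + r₂) := by
  obtain ⟨⟨m₁, α₁, I₁, J₁, p₁, hα₁, hp₁, hs₁⟩, hd₁⟩ := h₁
  obtain ⟨⟨m₂, α₂, I₂, J₂, p₂, hα₂, hp₂, hs₂⟩, hd₂⟩ := h₂
  refine ⟨⟨m₁ + m₂, Fin.append α₁ α₂, Fin.append I₁ I₂, Fin.append J₁ J₂, Fin.append p₁ p₂,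
    Fin.addCases ?_ ?_, Fin.addCases ?_ ?_, ?_⟩, Fin.addCases ?_ ?_⟩ <;>
    simp_all [SAStyleDeriv.rankLE, Fin.sum_univ_add]

theorem sum {ι : Type*} {s : Finset ι} {f : ι → MvPolynomial σ ℝ}
    (h : ∀ i ∈ s, Derivable Ax d (f i)) : Derivable Ax d (∑ i ∈ s, f i) :=
  sum_induction f _ (fun _ _ => add) zero h

theorem expandTerm_of_mem {I J : Finset σ} {p : MvPolynomial σ ℝ} (hp : p ∈ Ax)
    (hd : #I + #J + p.totalDegree ≤ d) : Derivable Ax d (expandTerm I J p) :=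
  ⟨⟨1, fun _ => 1, fun _ => I, fun _ => J, fun _ => p, fun _ => zero_le_one, fun _ => hp,
    by simp⟩, fun _ => (totalDegree_expandTerm_le I J p).trans hd⟩

/-- With `m (1 - ∑ fᵢ)² = m (1 - ∑ fᵢ) - ∑ m (fᵢ - fᵢ²) + ∑_{i ≠ j} m fᵢ fⱼ`, the square
turns Booleanity and pairwise exclusion of the `fᵢ` into `m (1 - ∑ fᵢ) ≥ 0`. -/
theorem mul_one_sub_sum {ι : Type*} [DecidableEq ι] {s : Finset ι} {f : ι → MvPolynomial σ ℝ}
    {m : MvPolynomial σ ℝ} (hsq : Derivable Ax d (m * (1 - ∑ i ∈ s, f i) ^ 2))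
    (hbool : ∀ i ∈ s, Derivable Ax d (m * (f i - f i ^ 2)))
    (hpair : ∀ i ∈ s, ∀ j ∈ s, i ≠ j → Derivable Ax d (-(m * f i * f j))) :
    Derivable Ax d (m * (1 - ∑ i ∈ s, f i)) := by
  have hpairs : Derivable Ax d (∑ i ∈ s, ∑ j ∈ s.erase i, -(m * f i * f j)) :=
    sum fun i hi => sum fun j hj => hpair i hi j (mem_of_mem_erase hj) (ne_of_mem_erase hj).symm
  have hsum_sq :
      (∑ i ∈ s, f i) ^ 2 = ∑ i ∈ s, f i ^ 2 + ∑ i ∈ s, f i * ∑ j ∈ s.erase i, f j := by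
    rw [sq, sum_mul, ← sum_add_distrib]
    exact sum_congr rfl fun i hi => by rw [← add_sum_erase _ _ hi, mul_add, sq]
  refine ((hsq.add (sum hbool)).add hpairs).of_eq ?_
  simp only [mul_assoc, ← mul_sum, sum_neg_distrib, sum_sub_distrib]
  linear_combination m * hsum_sq

/-- The clauses `a₁ ∨ ⋯ ∨ aᵢ ∨ yᵢ`, `¬yᵥ ∨ aᵥ₊₁ ∨ yᵥ₊₁` and `¬yⱼ ∨ aⱼ₊₁ ∨ aⱼ₊₂` of an
extension chain add up to the wide clause `a₁ ∨ ⋯ ∨ aⱼ₊₂`: the extension variables telescope. -/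
theorem chain {a y : ℕ → MvPolynomial σ ℝ} {c m : MvPolynomial σ ℝ} {i j : ℕ} (hij : i ≤ j)
    (hfirst : Derivable Ax d (m * (∑ v ∈ Icc 1 i, a v + y i - c)))
    (hstep : ∀ v, i ≤ v → v < j → Derivable Ax d (m * (a (v + 1) + y (v + 1) - y v)))
    (hlast : Derivable Ax d (m * (a (j + 1) + a (j + 2) - y j))) :
    Derivable Ax d (m * (∑ v ∈ Icc 1 (j + 2), a v - c)) := by
  have hprefix :
      ∀ l, i ≤ l → l ≤ j → Derivable Ax d (m * (∑ v ∈ Icc 1 l, a v + y l - c)) := by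
    intro l hil hlj
    induction l, hil using Nat.le_induction with
    | base => exact hfirst
    | succ l hil ih =>
      refine ((ih (by omega)).add (hstep l hil (by omega))).of_eq ?_
      rw [sum_Icc_succ_top (by omega)]
      ring
  refine ((hprefix j hij le_rfl).add hlast).of_eq ?_
  rw [sum_Icc_succ_top (by omega), sum_Icc_succ_top (by omega)]
  ring

end Derivable

end Derivations

section Lasserre

variable {σ : Type} {Q : Set (MvPolynomial σ ℝ)} {d : ℕ}

theorem mem_lasAxioms_of_mem {p : MvPolynomial σ ℝ} (h : p ∈ Q) : p ∈ LasAxioms σ Q :=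
  Set.mem_union_left _ (Set.mem_union_left _ (Set.mem_union_left _ h))

theorem totalDegree_X_sq_sub_X_le (a : σ) :
    (X a ^ 2 - X a : MvPolynomial σ ℝ).totalDegree ≤ 2 :=
  (totalDegree_sub _ _).trans (max_le ((totalDegree_pow _ _).trans (by simp [totalDegree_X]))
    (by simp [totalDegree_X]))

theorem totalDegree_X_sub_X_sq_le (a : σ) :
    (X a - X a ^ 2 : MvPolynomial σ ℝ).totalDegree ≤ 2 :=
  (totalDegree_sub _ _).trans (max_le (by simp [totalDegree_X])
    ((totalDegree_pow _ _).trans (by simp [totalDegree_X])))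

theorem totalDegree_one_sub_sum_le {ι : Type*} (s : Finset ι) {f : ι → MvPolynomial σ ℝ}
    {e : ℕ} (h : ∀ i ∈ s, (f i).totalDegree ≤ e) : (1 - ∑ i ∈ s, f i).totalDegree ≤ e :=
  (totalDegree_sub _ _).trans
    (max_le (by simp) ((totalDegree_finsetSum _ _).trans (Finset.sup_le h)))

theorem derivable_expandTerm_X_sq_sub_X (I J : Finset σ) (a : σ) (hd : #I + #J + 2 ≤ d) :
    Derivable (LasAxioms σ Q) d (expandTerm I J (X a ^ 2 - X a)) :=
  .expandTerm_of_mem (Set.mem_union_left _ (Set.mem_union_left _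
    (Set.mem_union_right _ ⟨a, .inl rfl⟩))) (by have := totalDegree_X_sq_sub_X_le a; omega)

theorem derivable_expandTerm_X_sub_X_sq (I J : Finset σ) (a : σ) (hd : #I + #J + 2 ≤ d) :
    Derivable (LasAxioms σ Q) d (expandTerm I J (X a - X a ^ 2)) :=
  .expandTerm_of_mem (Set.mem_union_left _ (Set.mem_union_left _
    (Set.mem_union_right _ ⟨a, .inr rfl⟩))) (by have := totalDegree_X_sub_X_sq_le a; omega)

theorem derivable_expandTerm_sq (I J : Finset σ) (q : MvPolynomial σ ℝ)
    (hd : #I + #J + 2 * q.totalDegree ≤ d) :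
    Derivable (LasAxioms σ Q) d (expandTerm I J (q ^ 2)) :=
  .expandTerm_of_mem (Set.mem_union_right _ ⟨q, rfl⟩)
    (by have := totalDegree_pow q 2; omega)

theorem derivable_X_mul_X_sub_sq (a b : σ) (hd : 4 ≤ d) :
    Derivable (LasAxioms σ Q) d (X a * X b - (X a * X b) ^ 2) := by
  refine (((derivable_expandTerm_X_sub_X_sq {b} ∅ a (by simp; omega)).add
    (derivable_expandTerm_X_sub_X_sq {a} ∅ b (by simp; omega))).add
    (derivable_expandTerm_X_sq_sub_X {b} {b} a (by simp; omega))).of_eq ?_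
  simp only [expandTerm, prod_singleton, prod_empty]
  ring

end Lasserre

section Encoding

variable {V : Type} [DecidableEq V]

theorem encodeIneqSA_insert {l : V × Bool} {C : Clause V} (h : l ∉ C) :
    encodeIneqSA (insert l C) = encodeIneqSA C + if l.2 then X l.1 else 1 - X l.1 := by
  simp only [encodeIneqSA, sum_insert h]
  ring

theorem totalDegree_encodeIneqSA_le (C : Clause V) : (encodeIneqSA C).totalDegree ≤ 1 := by
  refine (totalDegree_sub _ _).trans (max_le ((totalDegree_finsetSum _ _).trans
    (Finset.sup_le fun l _ => ?_)) (by simp))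
  split_ifs
  · simp [totalDegree_X]
  · exact (totalDegree_sub _ _).trans (by simp [totalDegree_X])

theorem encodeIneqSA_image_true {ι : Type} (s : Finset ι) {f : ι → V} (hf : f.Injective) :
    encodeIneqSA (s.image fun i => (f i, true)) = ∑ i ∈ s, X (f i) - 1 := by
  rw [encodeIneqSA, sum_image fun i _ j _ h => hf (Prod.ext_iff.1 h).1]
  simp

theorem encodeIneqSA_image_false (s : Finset V) :
    encodeIneqSA (s.image fun i => (i, false)) = (#s : MvPolynomial V ℝ) - 1 - ∑ i ∈ s, X i := by
  rw [encodeIneqSA, sum_image fun i _ j _ h => (Prod.ext_iff.1 h).1]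
  simp [sum_sub_distrib]
  ring

theorem encodeIneqSA_resolve {x : V} {C D : Clause V} (hC : (x, true) ∉ C)
    (hD : (x, false) ∉ D) (hCD : Disjoint C D) :
    encodeIneqSA (insert (x, true) C) + encodeIneqSA (insert (x, false) D) =
      encodeIneqSA (C ∪ D) := by
  rw [encodeIneqSA_insert hC, encodeIneqSA_insert hD]
  simp only [encodeIneqSA, sum_union hCD, if_true, Bool.false_eq_true, if_false]
  ring

variable {Q : Set (MvPolynomial V ℝ)} {d : ℕ}

/-- A negative clause `¬xᵢ` (`i ∈ s`) times the monomial `∏_{i ∈ I} xᵢ` is that monomial times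
`#s - 1 - ∑ xᵢ`; reducing each `xᵢ²` to `xᵢ` leaves `-∏_{i ∈ I} xᵢ`. -/
theorem derivable_neg_prod_X {I s : Finset V} (hs : s ⊆ I) (hd : #I + 1 ≤ d)
    (h : Derivable (LasAxioms V Q) d
      (expandTerm I ∅ (encodeIneqSA (s.image fun i => (i, false))))) :
    Derivable (LasAxioms V Q) d (-∏ i ∈ I, X i) := by
  have hbool : ∀ i ∈ s,
      Derivable (LasAxioms V Q) d (expandTerm (I.erase i) ∅ (X i ^ 2 - X i)) := fun i hi =>
    derivable_expandTerm_X_sq_sub_X _ _ _ (by have := card_erase_add_one (hs hi); simp; omega)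
  refine (h.add (Derivable.sum hbool)).of_eq ?_
  have hterm : ∀ i ∈ s, (∏ j ∈ I.erase i, X j) * (X i ^ 2 - X i : MvPolynomial V ℝ) =
      (∏ j ∈ I, X j) * (X i - 1) := fun i hi => by
    rw [← prod_erase_mul I _ (hs hi)]
    ring
  simp only [expandTerm_empty, encodeIneqSA_image_false, sum_congr rfl hterm, ← mul_sum,
    sum_sub_distrib, sum_const, nsmul_eq_mul, mul_one]
  ring

def DerivesClauses (Ax : Set (MvPolynomial V ℝ)) (d : ℕ) (F : Set (Clause V)) : Prop :=
  ∀ C ∈ F, ∀ I : Finset V, #I + 1 ≤ d → Derivable Ax d (expandTerm I ∅ (encodeIneqSA C))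

theorem derivesClauses_lasAxioms_image (F : Set (Clause V)) :
    DerivesClauses (LasAxioms V (encodeIneqSA '' F)) d F := fun C hC _ hI =>
  .expandTerm_of_mem (mem_lasAxioms_of_mem ⟨C, hC, rfl⟩)
    (by have := totalDegree_encodeIneqSA_le C; simp only [card_empty]; omega)

theorem DerivesClauses.prod_X_mul {Ax : Set (MvPolynomial V ℝ)} {F : Set (Clause V)}
    {C : Clause V} {I : Finset V} {e : MvPolynomial V ℝ} (h : DerivesClauses Ax d F) (hC : C ∈ F)
    (hI : #I + 1 ≤ d) (he : encodeIneqSA C = e) : Derivable Ax d ((∏ i ∈ I, X i) * e) :=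
  (h C hC I hI).of_eq (by rw [expandTerm_empty, he])

end Encoding

namespace DerivesClauses

open ERVar

section

variable {Q : Set (MvPolynomial ERVar ℝ)} {n k d : ℕ}
  (h : DerivesClauses (LasAxioms ERVar Q) d (RPHP n k))
include h

theorem pigeon_sub_one (hd : 1 ≤ d) {u : ℕ} (hu : u ∈ Icc 1 k) :
    Derivable (LasAxioms ERVar Q) d (∑ v ∈ Icc 1 n, X (p u v) - 1) := by
  rw [mem_Icc] at hu
  exact (h.prod_X_mul (I := ∅) (.inl ⟨u, hu.1, hu.2, rfl⟩) (by simpa using hd)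
    (encodeIneqSA_image_true _ fun _ _ e => (p.inj e).2)).of_eq (by simp)

theorem chosen_sub_pigeons (hd : 4 ≤ d) {v : ℕ} (hv : v ∈ Icc 1 n) :
    Derivable (LasAxioms ERVar Q) d (X (r v) - ∑ u ∈ Icc 1 k, X (p u v)) := by
  rw [mem_Icc] at hv
  have hexclusive :
      Derivable (LasAxioms ERVar Q) d (X (r v) * (1 - ∑ u ∈ Icc 1 k, X (p u v))) := by
    refine Derivable.mul_one_sub_sum ?_ (fun u _ => ?_) (fun u hu u' hu' hne => ?_)
    · refine (derivable_expandTerm_sq {r v} ∅ (1 - ∑ u ∈ Icc 1 k, X (p u v)) ?_).of_eq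
        (by simp)
      have := totalDegree_one_sub_sum_le (Icc 1 k) fun u _ =>
        (totalDegree_X (R := ℝ) (p u v)).le
      simp only [card_singleton, card_empty]
      omega
    · exact (derivable_expandTerm_X_sub_X_sq {r v} ∅ (p u v) (by simp; omega)).of_eq (by simp)
    · rw [mem_Icc] at hu hu'
      have hcard := card_le_three (a := r v) (b := p u v) (c := p u' v)
      have hB := h _ (.inr (.inl ⟨u, u', v, hu.1, hu.2, hu'.1, hu'.2, hne, hv.1, hv.2, rfl⟩))
        {r v, p u v, p u' v} (by omega)
      refine (derivable_neg_prod_X (I := {r v, p u v, p u' v}) (s := {p u v, p u' v})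
        (subset_insert _ _) (by omega)
        (by simpa only [image_insert, image_singleton] using hB)).of_eq ?_
      rw [prod_insert (by simp), prod_pair (by simpa using hne)]
      ring
  have hrelate : ∀ u ∈ Icc 1 k,
      Derivable (LasAxioms ERVar Q) d (X (p u v) * X (r v) - X (p u v)) := by
    intro u hu
    rw [mem_Icc] at hu
    have hC := h.prod_X_mul (I := {p u v})
      (.inr (.inr (.inl ⟨u, v, hu.1, hu.2, hv.1, hv.2, rfl⟩))) (by simp; omega)
      (e := X (r v) - X (p u v)) (by rw [encodeIneqSA, sum_pair (by simp)]; simp; ring)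
    refine (hC.add (derivable_expandTerm_X_sq_sub_X ∅ ∅ (p u v) (by simp; omega))).of_eq ?_
    simp
    ring
  refine (hexclusive.add (Derivable.sum hrelate)).of_eq ?_
  rw [sum_sub_distrib, ← sum_mul]
  ring

theorem hole_load_sub_chosen (hd : 2 ≤ d) {v : ℕ} (hv : v ∈ Icc 1 n) :
    Derivable (LasAxioms ERVar Q) d (∑ w ∈ Icc 1 (k - 1), X (r v) * X (q v w) - X (r v)) := by
  rw [mem_Icc] at hv
  have hD := h.prod_X_mul (I := {r v}) (.inr (.inr (.inr (.inl ⟨v, hv.1, hv.2, rfl⟩))))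
    (by simp; omega) (e := ∑ w ∈ Icc 1 (k - 1), X (q v w) - X (r v))
    (by rw [encodeIneqSA_insert (by simp), encodeIneqSA_image_true _ fun _ _ e => (q.inj e).2]
        simp)
  refine (hD.add (derivable_expandTerm_X_sq_sub_X ∅ ∅ (r v) (by simp; omega))).of_eq ?_
  rw [prod_singleton, mul_sub, mul_sum, expandTerm_empty, prod_empty, one_mul]
  ring

theorem one_sub_hole_load (hd : 5 ≤ d) {w : ℕ} (hw : w ∈ Icc 1 (k - 1)) :
    Derivable (LasAxioms ERVar Q) d (1 - ∑ v ∈ Icc 1 n, X (r v) * X (q v w)) := by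
  rw [mem_Icc] at hw
  refine (Derivable.mul_one_sub_sum (m := 1) ?_ (fun v _ => ?_)
    (fun v hv v' hv' hne => ?_)).of_eq (one_mul _)
  · refine (derivable_expandTerm_sq ∅ ∅ (1 - ∑ v ∈ Icc 1 n, X (r v) * X (q v w)) ?_).of_eq
      (by simp)
    have := totalDegree_one_sub_sum_le (Icc 1 n) (e := 2) fun v _ =>
      (totalDegree_mul (X (r v) : MvPolynomial ERVar ℝ) (X (q v w))).trans
        (by simp [totalDegree_X])
    simp only [card_empty]
    omega
  · exact (derivable_X_mul_X_sub_sq _ _ (by omega)).of_eq (one_mul _).symm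
  · rw [mem_Icc] at hv hv'
    have hcard := card_le_four (a := r v) (b := r v') (c := q v w) (d := q v' w)
    have hE := h _ (.inr (.inr (.inr (.inr
      ⟨v, v', w, hv.1, hv.2, hv'.1, hv'.2, hne, hw.1, hw.2, rfl⟩))))
      {r v, r v', q v w, q v' w} (by omega)
    refine (derivable_neg_prod_X (I := {r v, r v', q v w, q v' w}) subset_rfl (by omega)
      (by simpa only [image_insert, image_singleton] using hE)).of_eq ?_
    rw [prod_insert (by simp [hne]), prod_insert (by simp), prod_pair (by simp [hne])]
    ring

theorem derivable_neg_one (hk : 1 ≤ k) (hd : 5 ≤ d) : Derivable (LasAxioms ERVar Q) d (-1) := by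
  have hchosen : Derivable (LasAxioms ERVar Q) d
      (∑ v ∈ Icc 1 n, (X (r v) - ∑ u ∈ Icc 1 k, X (p u v))) :=
    .sum fun v hv => h.chosen_sub_pigeons (by omega) hv
  have hpigeons : Derivable (LasAxioms ERVar Q) d
      (∑ u ∈ Icc 1 k, (∑ v ∈ Icc 1 n, X (p u v) - 1)) :=
    .sum fun u hu => h.pigeon_sub_one (by omega) hu
  have hholes : Derivable (LasAxioms ERVar Q) d
      (∑ w ∈ Icc 1 (k - 1), (1 - ∑ v ∈ Icc 1 n, X (r v) * X (q v w))) :=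
    .sum fun w hw => h.one_sub_hole_load hd hw
  have hloads : Derivable (LasAxioms ERVar Q) d
      (∑ v ∈ Icc 1 n, (∑ w ∈ Icc 1 (k - 1), X (r v) * X (q v w) - X (r v))) :=
    .sum fun v hv => h.hole_load_sub_chosen (by omega) hv
  refine (((hchosen.add hpigeons).add hholes).add hloads).of_eq ?_
  simp only [sum_sub_distrib, sum_const, Nat.card_Icc, nsmul_eq_mul, mul_one]
  rw [sum_comm (s := Icc 1 n) (t := Icc 1 k), sum_comm (s := Icc 1 n) (t := Icc 1 (k - 1))]
  push_cast [Nat.cast_sub hk]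
  ring

end

section

variable {Ax : Set (MvPolynomial ERVar ℝ)} {n k d : ℕ} {I : Finset ERVar}
  (h : DerivesClauses Ax d (ERPHP n k))
include h

theorem pigeon_of_erphp (hn : 4 ≤ n) {u : ℕ} (hu₁ : 1 ≤ u) (hu₂ : u ≤ k) (hI : #I + 1 ≤ d) :
    Derivable Ax d (expandTerm I ∅ (encodeIneqSA ((Icc 1 n).image fun v => (p u v, true)))) := by
  obtain ⟨j, rfl⟩ : ∃ j, n = j + 2 := ⟨n - 2, by omega⟩
  rw [encodeIneqSA_image_true _ fun _ _ e => (p.inj e).2, expandTerm_empty]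
  refine Derivable.chain (a := fun v => X (p u v)) (y := fun v => X (y u v)) (i := 2) (by omega)
    (h.prod_X_mul (.inl ⟨u, hu₁, hu₂, rfl⟩) hI ?_)
    (fun v hv hvj => h.prod_X_mul (.inr (.inl ⟨u, v, hu₁, hu₂, hv, by omega, rfl⟩)) hI ?_)
    (h.prod_X_mul (C := {(y u j, false), (p u (j + 1), true), (p u (j + 2), true)})
      (.inr (.inr (.inl ⟨u, hu₁, hu₂, by simp⟩))) hI ?_) <;>
  · simp [encodeIneqSA, sum_Icc_succ_top]
    ring

theorem hole_of_erphp (hk : 4 ≤ k) {v : ℕ} (hv₁ : 1 ≤ v) (hv₂ : v ≤ n) (hI : #I + 1 ≤ d) :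
    Derivable Ax d (expandTerm I ∅ (encodeIneqSA
      (insert (r v, false) ((Icc 1 (k - 1)).image fun w => (q v w, true))))) := by
  obtain ⟨j, rfl⟩ : ∃ j, k = j + 3 := ⟨k - 3, by omega⟩
  have hchain := Derivable.chain (a := fun w => X (q v w)) (y := fun w => X (z v w))
    (c := X (r v)) (i := 1) (j := j) (by omega)
    (h.prod_X_mul (.inr (.inr (.inr (.inl ⟨v, hv₁, hv₂, rfl⟩)))) hI ?_)
    (fun w hw hwj => h.prod_X_mul
      (.inr (.inr (.inr (.inr (.inl ⟨v, w, hv₁, hv₂, hw, by omega, rfl⟩))))) hI ?_)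
    (h.prod_X_mul (C := {(z v j, false), (q v (j + 1), true), (q v (j + 2), true)})
      (.inr (.inr (.inr (.inr (.inr (.inl ⟨v, hv₁, hv₂, by simp⟩)))))) hI ?_)
  · refine hchain.of_eq ?_
    rw [encodeIneqSA_insert (by simp), encodeIneqSA_image_true _ fun _ _ e => (q.inj e).2,
      expandTerm_empty, show j + 3 - 1 = j + 2 by omega]
    simp
  all_goals
    simp [encodeIneqSA]
    ring

theorem collision_of_erphp {v v' w : ℕ} (hv₁ : 1 ≤ v) (hv₂ : v ≤ n) (hv'₁ : 1 ≤ v')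
    (hv'₂ : v' ≤ n) (hne : v ≠ v') (hw₁ : 1 ≤ w) (hw₂ : w ≤ k - 1) (hI : #I + 1 ≤ d) :
    Derivable Ax d (expandTerm I ∅ (encodeIneqSA
      {(r v, false), (r v', false), (q v w, false), (q v' w, false)})) := by
  have hchosen := h _ (.inr (.inr (.inr (.inr (.inr (.inr (.inr (.inr (.inl
    ⟨v, v', hv₁, hv₂, hv'₁, hv'₂, hne, rfl⟩))))))))) I hI
  have hcollide := h _ (.inr (.inr (.inr (.inr (.inr (.inr (.inr (.inr (.inr
    ⟨v, v', w, hv₁, hv₂, hv'₁, hv'₂, hne, hw₁, hw₂, rfl⟩))))))))) I hI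
  refine (hchosen.add hcollide).of_eq ?_
  rw [expandTerm_empty, expandTerm_empty, expandTerm_empty, ← mul_add,
    show ({(r v, false), (r v', false), (rr v v', true)} : Clause ERVar) =
      insert (rr v v', true) {(r v, false), (r v', false)} by ext; simp; tauto,
    encodeIneqSA_resolve (by simp) (by simp) (by simp), insert_union, singleton_union]

theorem rphp_of_erphp (hn : 4 ≤ n) (hk : 4 ≤ k) : DerivesClauses Ax d (RPHP n k) := by
  rintro C (⟨u, hu₁, hu₂, rfl⟩ | ⟨u, u', v, hu₁, hu₂, hu'₁, hu'₂, hne, hv₁, hv₂, rfl⟩ |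
    ⟨u, v, hu₁, hu₂, hv₁, hv₂, rfl⟩ | ⟨v, hv₁, hv₂, rfl⟩ |
    ⟨v, v', w, hv₁, hv₂, hv'₁, hv'₂, hne, hw₁, hw₂, rfl⟩) I hI
  · exact h.pigeon_of_erphp hn hu₁ hu₂ hI
  · exact h _ (.inr (.inr (.inr (.inr (.inr (.inr (.inl
      ⟨u, u', v, hu₁, hu₂, hu'₁, hu'₂, hne, hv₁, hv₂, rfl⟩))))))) I hI
  · exact h _ (.inr (.inr (.inr (.inr (.inr (.inr (.inr (.inl
      ⟨u, v, hu₁, hu₂, hv₁, hv₂, rfl⟩)))))))) I hI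
  · exact h.hole_of_erphp hk hv₁ hv₂ hI
  · exact h.collision_of_erphp hv₁ hv₂ hv'₁ hv'₂ hne hw₁ hw₂ hI

end

end DerivesClauses

theorem rphp_erphp_lasserre_rank_nine_general (n k : ℕ) (hn : 4 ≤ n) (hk : 4 ≤ k) :
    (∃ d : SAStyleDeriv ERVar
        (LasAxioms ERVar ((fun C => encodeIneqSA C) '' RPHP n k)) (-1),
      d.rankLE 9) ∧
    (∃ d : SAStyleDeriv ERVar
        (LasAxioms ERVar ((fun C => encodeIneqSA C) '' ERPHP n k)) (-1),
      d.rankLE 9) :=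
  ⟨(derivesClauses_lasAxioms_image (RPHP n k)).derivable_neg_one (by omega) (by norm_num),
    ((derivesClauses_lasAxioms_image (ERPHP n k)).rphp_of_erphp hn hk).derivable_neg_one
      (by omega) (by norm_num)⟩

/-- for all `k ≥ 4` and `n ≥ 4` with `n ≥ k`, both the formula
`RPHP` and the 3-CNF formula `ERPHP` have Lasserre refutations of rank 9. -/
theorem rphp_erphp_lasserre_rank_nine (n k : ℕ) (hn : 4 ≤ n) (hk : 4 ≤ k)
    (hkn : k ≤ n) :
    (∃ d : SAStyleDeriv ERVar
        (LasAxioms ERVar ((fun C => encodeIneqSA C) '' RPHP n k)) (-1),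
      d.rankLE 9) ∧
    (∃ d : SAStyleDeriv ERVar
        (LasAxioms ERVar ((fun C => encodeIneqSA C) '' ERPHP n k)) (-1),
      d.rankLE 9) :=
  rphp_erphp_lasserre_rank_nine_general n k hn hk

end NarrowProofs
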